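/- arXiv:2604.24107 — 2 statements merged into one kernel-verified Lean document; each statement's English description precedes it below -/
import Mathlib

section
/- Let a1 ≤ b1 and a2 ≤ b2 be reals, set e := b2 − a2, and let P be a predicate on ℝ. Then the following are equivalent: (1) for every t1 ∈ [a1, b1] there exists t2 ∈ [t1+a2, t1+b2] with P(t2); (2) for every real c with a1+a2 ≤ c and c+e ≤ b1+b2, there exists s ∈ [c, c+e] with P(s). -/
open Set

theorem forall_mem_Icc_add_right_iff {α : Type*} [AddCommGroup α] [PartialOrder α]
    [IsOrderedAddMonoid α] (a b d : α) (Q : α → Prop) :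
    (∀ t ∈ Icc a b, Q (t + d)) ↔ ∀ c ∈ Icc (a + d) (b + d), Q c := by
  rw [← image_add_const_Icc, forall_mem_image]

theorem patrol_characterization_general (a1 b1 a2 b2 : ℝ)
    (e : ℝ) (he : e = b2 - a2) (P : ℝ → Prop) :
    (∀ t1 ∈ Set.Icc a1 b1, ∃ t2 ∈ Set.Icc (t1 + a2) (t1 + b2), P t2) ↔
      (∀ c : ℝ, a1 + a2 ≤ c → c + e ≤ b1 + b2 → ∃ s ∈ Set.Icc c (c + e), P s) := by
  subst he
  have window (t : ℝ) : t + b2 = t + a2 + (b2 - a2) := by ring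
  simp only [window, add_le_add_iff_right]
  -- the subwindow starting at `c` is the one seen from `t1 = c - a2`
  rw [forall_mem_Icc_add_right_iff a1 b1 a2 fun c => ∃ s ∈ Icc c (c + (b2 - a2)), P s]
  simp only [mem_Icc, and_imp]

/-- Characterization of the time-constrained patrol task
`G_{[a1,b1]} F_{[a2,b2]} φ`: the region must be visited at least once in
every subwindow of length `e = b2 - a2` of `[a1+a2, b1+b2]`. -/
theorem patrol_characterization (a1 b1 a2 b2 : ℝ) (h1 : a1 ≤ b1) (h2 : a2 ≤ b2)
    (e : ℝ) (he : e = b2 - a2) (P : ℝ → Prop) :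
    (∀ t1 ∈ Set.Icc a1 b1, ∃ t2 ∈ Set.Icc (t1 + a2) (t1 + b2), P t2) ↔
      (∀ c : ℝ, a1 + a2 ≤ c → c + e ≤ b1 + b2 → ∃ s ∈ Set.Icc c (c + e), P s) :=
  patrol_characterization_general a1 b1 a2 b2 e he P
end

section
/- (Soundness of the G F -case check of Algorithm 1.) Let a1 ≤ b1 and a2 ≤ b2 be reals and set e := b2 − a2. Let k ≥ 1 and let s_0 < s_1 < … < s_{k−1} be a strictly increasing finite sequence of reals such that: s_0 − (a1+a2) ≤ e; (b1+b2) − s_{k−1} ≤ e; a1+a2 ≤ s_0; s_{k−1} ≤ b1+b2; and s_{j+1} − s_j ≤ e for every j ∈ {0,…,k−2}. Then for every t1 ∈ [a1, b1] there exists j ∈ {0,…,k−1} with t1+a2 ≤ s_j ≤ t1+b2. In particular, any signal x satisfying P(x(s_j)) for all j satisfies G_{[a1,b1]}F_{[a2,b2]}P at time 0. -/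
/-!
A sequence that starts at or below `v`, ends at or above `u`, and never climbs by more than
`v - u` in one step cannot jump over `[u, v]`: if `s N < u ≤ s (N + 1)` then
`s (N + 1) ≤ s N + (v - u) < v`. For `t1 ∈ [a1, b1]` apply this to
`[u, v] = [t1 + a2, t1 + b2]`; the start and end conditions of the check give `s 0 ≤ v` and
`u ≤ s (k - 1)`.
-/

theorem exists_mem_Icc_of_sub_le {α : Type*} [AddCommGroup α] [LinearOrder α]
    [IsOrderedAddMonoid α] {s : ℕ → α} {u v : α} {N : ℕ}
    (hstart : s 0 ≤ v) (hend : u ≤ s N) (hstep : ∀ j < N, s (j + 1) - s j ≤ v - u) :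
    ∃ j ≤ N, s j ∈ Set.Icc u v := by
  induction N with
  | zero => exact ⟨0, le_rfl, hend, hstart⟩
  | succ N ih =>
    by_cases hN : u ≤ s N
    · obtain ⟨j, hj, hjmem⟩ := ih hN fun j hj => hstep j (Nat.lt_succ_of_lt hj)
      exact ⟨j, Nat.le_succ_of_le hj, hjmem⟩
    · refine ⟨N + 1, le_rfl, hend, ?_⟩
      have := hstep N N.lt_succ_self
      rw [sub_le_iff_le_add] at this
      calc s (N + 1) ≤ v - u + s N := this
        _ ≤ v - u + u := by gcongr; exact le_of_not_ge hN
        _ = v := sub_add_cancel v u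

theorem gf_check_sound_general {n : ℕ} (a1 b1 a2 b2 : ℝ)
    (e : ℝ) (he : e = b2 - a2)
    (k : ℕ) (hk : 1 ≤ k) (s : ℕ → ℝ)
    (hstart : s 0 - (a1 + a2) ≤ e) (hend : (b1 + b2) - s (k - 1) ≤ e)
    (hgap : ∀ j, j + 2 ≤ k → s (j + 1) - s j ≤ e) :
    (∀ t1 ∈ Set.Icc a1 b1, ∃ j < k, t1 + a2 ≤ s j ∧ s j ≤ t1 + b2) ∧
      (∀ (x : ℝ → (Fin n → ℝ)) (P : (Fin n → ℝ) → Prop),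
        (∀ j < k, P (x (s j))) →
          ∀ t1 ∈ Set.Icc a1 b1, ∃ t2 ∈ Set.Icc (t1 + a2) (t1 + b2), P (x t2)) := by
  subst he
  have hit : ∀ t1 ∈ Set.Icc a1 b1, ∃ j < k, t1 + a2 ≤ s j ∧ s j ≤ t1 + b2 := by
    rintro t1 ⟨ht1a, ht1b⟩
    have hstep : ∀ j < k - 1, s (j + 1) - s j ≤ t1 + b2 - (t1 + a2) := fun j hj => by
      simpa using hgap j (by omega)
    obtain ⟨j, hj, hjmem⟩ :=
      exists_mem_Icc_of_sub_le (by linarith) (by linarith) hstep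
    exact ⟨j, by omega, hjmem⟩
  refine ⟨hit, fun x P hP t1 ht1 => ?_⟩
  obtain ⟨j, hjk, hjmem⟩ := hit t1 ht1
  exact ⟨s j, hjmem, hP j hjk⟩

/-- Soundness of the G F-case check of Algorithm 1: if the time instants
`s 0 < s 1 < … < s (k-1)` at which the candidate points lie in the region of
interest satisfy the gap conditions with `e = b2 - a2`, then every
`t1 ∈ [a1, b1]` admits some `s j ∈ [t1+a2, t1+b2]`; in particular any signal
satisfying `P` at all the `s j` satisfies `G_{[a1,b1]} F_{[a2,b2]} P` at 0. -/
theorem gf_check_sound {n : ℕ} (a1 b1 a2 b2 : ℝ) (h1 : a1 ≤ b1) (h2 : a2 ≤ b2)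
    (e : ℝ) (he : e = b2 - a2)
    (k : ℕ) (hk : 1 ≤ k) (s : ℕ → ℝ)
    (hmono : ∀ j, j + 2 ≤ k → s j < s (j + 1))
    (hstart : s 0 - (a1 + a2) ≤ e) (hend : (b1 + b2) - s (k - 1) ≤ e)
    (hlo : a1 + a2 ≤ s 0) (hhi : s (k - 1) ≤ b1 + b2)
    (hgap : ∀ j, j + 2 ≤ k → s (j + 1) - s j ≤ e) :
    (∀ t1 ∈ Set.Icc a1 b1, ∃ j < k, t1 + a2 ≤ s j ∧ s j ≤ t1 + b2) ∧
      (∀ (x : ℝ → (Fin n → ℝ)) (P : (Fin n → ℝ) → Prop),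
        (∀ j < k, P (x (s j))) →
          ∀ t1 ∈ Set.Icc a1 b1, ∃ t2 ∈ Set.Icc (t1 + a2) (t1 + b2), P (x t2)) :=
  gf_check_sound_general a1 b1 a2 b2 e he k hk s hstart hend hgap
end
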